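/- For every joint probability distribution P on X_1 × X_2 with marginals P_1, P_2, the conditional mutual information satisfies I_P(X_1;Y_2|X_2) ≤ (P_2(0) − P(0,0))·C_{1,0} + (1 − P_1(0) − P_2(0) + P(0,0))·C_{1,1}. -/

import Mathlib

open Real BigOperators Finset

/-- Entropy of a finite probability vector, with the convention `0 * log 0 = 0`
(automatic since `Real.log 0 = 0`). -/
noncomputable def ent {n : ℕ} (p : Fin n → ℝ) : ℝ := -∑ y, p y * Real.log (p y)

/-- `Q` is a probability distribution on `Fin n`. -/
def IsProbDist {n : ℕ} (Q : Fin n → ℝ) : Prop := (∀ x, 0 ≤ Q x) ∧ ∑ x, Q x = 1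

/-- `P` is a joint probability distribution. -/
def IsJointProbDist {m n : ℕ} (P : Fin m → Fin n → ℝ) : Prop :=
  (∀ x1 x2, 0 ≤ P x1 x2) ∧ ∑ x1, ∑ x2, P x1 x2 = 1

/-- First marginal `P_1`. -/
noncomputable def marg1 {m n : ℕ} (P : Fin m → Fin n → ℝ) (x1 : Fin m) : ℝ := ∑ x2, P x1 x2

/-- Second marginal `P_2`. -/
noncomputable def marg2 {m n : ℕ} (P : Fin m → Fin n → ℝ) (x2 : Fin n) : ℝ := ∑ x1, P x1 x2

/-- Conditional mutual information `I_P(X₁;Y₂|X₂)`; terms with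
`P x1 x2 * W2 x1 x2 y2 = 0` vanish, and summands with `marg2 P x2 = 0` vanish
since then `P x1 x2 = 0`. -/
noncomputable def condMI1 {m n t : ℕ} (P : Fin m → Fin n → ℝ)
    (W2 : Fin m → Fin n → Fin t → ℝ) : ℝ :=
  ∑ x2, ∑ x1, ∑ y2, P x1 x2 * W2 x1 x2 y2 *
    Real.log (W2 x1 x2 y2 / ((∑ x1', P x1' x2 * W2 x1' x2 y2) / marg2 P x2))

/-- Conditional mutual information `I_P(X₂;Y₁|X₁)`. -/
noncomputable def condMI2 {m n t : ℕ} (P : Fin m → Fin n → ℝ)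
    (W1 : Fin m → Fin n → Fin t → ℝ) : ℝ :=
  ∑ x1, ∑ x2, ∑ y1, P x1 x2 * W1 x1 x2 y1 *
    Real.log (W1 x1 x2 y1 / ((∑ x2', P x1 x2' * W1 x1 x2' y1) / marg1 P x1))

/-- Structural assumptions of a generalized push-to-talk two-way channel with
input alphabets `Fin (r1+3)`, `Fin (r2+3)` and output alphabets `Fin (s1+2)`,
`Fin (s2+2)`: both marginal channels are transition matrices; the row of
input `0` of each user is uniform; for each state, the nonzero-input rows are
permutations of the row of input `1` and have constant column sums
(weak symmetry). -/
def GenPTT {r1 r2 s1 s2 : ℕ} (W1 : Fin (r1 + 3) → Fin (r2 + 3) → Fin (s1 + 2) → ℝ)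
    (W2 : Fin (r1 + 3) → Fin (r2 + 3) → Fin (s2 + 2) → ℝ) : Prop :=
  (∀ x1 x2 y1, 0 ≤ W1 x1 x2 y1) ∧ (∀ x1 x2 y2, 0 ≤ W2 x1 x2 y2) ∧
  (∀ x1 x2, ∑ y1, W1 x1 x2 y1 = 1) ∧ (∀ x1 x2, ∑ y2, W2 x1 x2 y2 = 1) ∧
  (∀ x2 y2, W2 0 x2 y2 = 1 / ((s2 : ℝ) + 2)) ∧
  (∀ x2, ∀ x1 : Fin (r1 + 3), x1 ≠ 0 →
    ∃ σ : Equiv.Perm (Fin (s2 + 2)), ∀ y2, W2 x1 x2 y2 = W2 1 x2 (σ y2)) ∧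
  (∀ x2, ∀ y2 y2' : Fin (s2 + 2),
    ∑ x1 ∈ Finset.univ.filter (fun x1 => x1 ≠ (0 : Fin (r1 + 3))), W2 x1 x2 y2 =
    ∑ x1 ∈ Finset.univ.filter (fun x1 => x1 ≠ (0 : Fin (r1 + 3))), W2 x1 x2 y2') ∧
  (∀ x1 y1, W1 x1 0 y1 = 1 / ((s1 : ℝ) + 2)) ∧
  (∀ x1, ∀ x2 : Fin (r2 + 3), x2 ≠ 0 →
    ∃ σ : Equiv.Perm (Fin (s1 + 2)), ∀ y1, W1 x1 x2 y1 = W1 x1 1 (σ y1)) ∧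
  (∀ x1, ∀ y1 y1' : Fin (s1 + 2),
    ∑ x2 ∈ Finset.univ.filter (fun x2 => x2 ≠ (0 : Fin (r2 + 3))), W1 x1 x2 y1 =
    ∑ x2 ∈ Finset.univ.filter (fun x2 => x2 ≠ (0 : Fin (r2 + 3))), W1 x1 x2 y1')

/-- `C_{1,x₂} = log s₂ − H(row of input 1 of Q_{1,x₂})`. -/
noncomputable def C1 {r1 r2 s2 : ℕ} (W2 : Fin (r1 + 3) → Fin (r2 + 3) → Fin (s2 + 2) → ℝ)
    (x2 : Fin (r2 + 3)) : ℝ := Real.log ((s2 : ℝ) + 2) - ent (fun y2 => W2 1 x2 y2)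

/-- `C_{2,x₁} = log s₁ − H(row of input 1 of Q_{2,x₁})`. -/
noncomputable def C2 {r1 r2 s1 : ℕ} (W1 : Fin (r1 + 3) → Fin (r2 + 3) → Fin (s1 + 2) → ℝ)
    (x1 : Fin (r1 + 3)) : ℝ := Real.log ((s1 : ℝ) + 2) - ent (fun y1 => W1 x1 1 y1)

/-- The channel symmetry property: `C_{1,x₂} = C_{1,1}` for all `x₂ ≠ 0` and
`C_{2,x₁} = C_{2,1}` for all `x₁ ≠ 0`. -/
def SymProp {r1 r2 s1 s2 : ℕ} (W1 : Fin (r1 + 3) → Fin (r2 + 3) → Fin (s1 + 2) → ℝ)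
    (W2 : Fin (r1 + 3) → Fin (r2 + 3) → Fin (s2 + 2) → ℝ) : Prop :=
  (∀ x2 : Fin (r2 + 3), x2 ≠ 0 → C1 W2 x2 = C1 W2 1) ∧
  (∀ x1 : Fin (r1 + 3), x1 ≠ 0 → C2 W1 x1 = C2 W1 1)

/-!
For fixed `x₂` the summand of `I_P(X₁;Y₂|X₂)` is `P₂(x₂) · I(X₁;Y₂ | X₂ = x₂)`. Since the output
entropy is at most `log s₂` (Jensen for the concave `t ↦ -t log t`), it is bounded by
`∑_{x₁} P(x₁,x₂) (log s₂ - H(W₂(·|x₁,x₂)))`. The row `x₁ = 0` is uniform and contributes `0`;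
every other row is a permutation of row `1` and contributes `C_{1,x₂}`. Summing over `x₂` and
using `C_{1,x₂} = C_{1,1}` for `x₂ ≠ 0` gives the bound.
-/

lemma sum_negMulLog_le {β : Type*} [Fintype β] [Nonempty β] (q : β → ℝ) (hq : ∀ b, 0 ≤ q b) :
    ∑ b, negMulLog (q b) ≤ negMulLog (∑ b, q b) + (∑ b, q b) * log (Fintype.card β) := by
  set n : ℝ := (Fintype.card β : ℝ)
  have hn : 0 < n := by positivity
  have jensen := concaveOn_negMulLog.le_map_sum (t := univ) (w := fun _ => n⁻¹)
    (p := q) (fun _ _ => by positivity) (by simp [n, hn.ne']) (fun b _ => hq b)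
  have hinv : negMulLog n⁻¹ = n⁻¹ * log n := by simp [negMulLog, log_inv]
  simp only [smul_eq_mul, ← mul_sum, negMulLog_mul, hinv] at jensen
  have := mul_le_mul_of_nonneg_left jensen hn.le
  field_simp at this
  linarith

section ScaledMutualInfo

variable {α β : Type*} [Fintype α] [Fintype β]

/-- For input weights `p` of total mass `M`, this is `M · I(X;Y)`, where `X ~ p / M` is sent
through the channel `W`. -/
noncomputable def scaledMutualInfo (p : α → ℝ) (W : α → β → ℝ) : ℝ :=
  ∑ a, ∑ b, p a * W a b * log (W a b / ((∑ a', p a' * W a' b) / ∑ a', p a'))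

lemma scaledMutualInfo_eq {p : α → ℝ} {W : α → β → ℝ} (hp : ∀ a, 0 ≤ p a)
    (hW : ∀ a b, 0 ≤ W a b) (hW1 : ∀ a, ∑ b, W a b = 1) :
    scaledMutualInfo p W = ∑ b, negMulLog (∑ a, p a * W a b) - negMulLog (∑ a, p a)
      - ∑ a, p a * ∑ b, negMulLog (W a b) := by
  have hterm : ∀ a b, p a * W a b * log (W a b / ((∑ a', p a' * W a' b) / ∑ a', p a')) =
      p a * W a b * log (∑ a', p a') - p a * W a b * log (∑ a', p a' * W a' b)
        - p a * negMulLog (W a b) := by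
    intro a b
    rcases (mul_nonneg (hp a) (hW a b)).eq_or_lt with hzero | hpos
    · rw [← hzero]
      have : p a * negMulLog (W a b) = 0 := by
        rcases mul_eq_zero.1 hzero.symm with h | h <;> simp [h]
      rw [this]
      ring
    · have hpa : 0 < p a := pos_of_mul_pos_left hpos (hW a b)
      have hWab : 0 < W a b := pos_of_mul_pos_right hpos (hp a)
      have hout : 0 < ∑ a', p a' * W a' b := hpos.trans_le <|
        single_le_sum (f := fun a' => p a' * W a' b)
          (fun a' _ => mul_nonneg (hp a') (hW a' b)) (mem_univ a)
      have hmass : 0 < ∑ a', p a' := hpa.trans_le <|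
        single_le_sum (fun a' _ => hp a') (mem_univ a)
      rw [log_div hWab.ne' (div_pos hout hmass).ne', log_div hout.ne' hmass.ne', negMulLog]
      ring
  have hout : ∑ a, ∑ b, p a * W a b * log (∑ a', p a' * W a' b) =
      -∑ b, negMulLog (∑ a, p a * W a b) := by
    rw [sum_comm]
    simp only [← sum_mul, negMulLog, neg_mul, sum_neg_distrib, neg_neg]
  have hmass : ∑ a, ∑ b, p a * W a b * log (∑ a', p a') = -negMulLog (∑ a, p a) := by
    simp only [← sum_mul, ← mul_sum, hW1, mul_one, negMulLog, neg_mul, neg_neg]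
  simp only [scaledMutualInfo, hterm, sum_sub_distrib, hout, hmass, ← mul_sum]
  ring

lemma scaledMutualInfo_le [Nonempty β] {p : α → ℝ} {W : α → β → ℝ} (hp : ∀ a, 0 ≤ p a)
    (hW : ∀ a b, 0 ≤ W a b) (hW1 : ∀ a, ∑ b, W a b = 1) :
    scaledMutualInfo p W ≤
      ∑ a, p a * (log (Fintype.card β) - ∑ b, negMulLog (W a b)) := by
  have hmass : ∑ b, ∑ a, p a * W a b = ∑ a, p a := by
    rw [sum_comm]
    simp only [← mul_sum, hW1, mul_one]
  have gibbs := sum_negMulLog_le (fun b => ∑ a, p a * W a b)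
    (fun b => sum_nonneg fun a _ => mul_nonneg (hp a) (hW a b))
  rw [hmass] at gibbs
  rw [scaledMutualInfo_eq hp hW hW1]
  simp only [mul_sub, sum_sub_distrib, ← sum_mul]
  linarith

end ScaledMutualInfo

lemma ent_eq_sum_negMulLog {n : ℕ} (p : Fin n → ℝ) : ent p = ∑ y, negMulLog (p y) := by
  simp only [ent, negMulLog, neg_mul, sum_neg_distrib]

lemma sum_mul_eq_of_forall_ne {ι : Type*} [Fintype ι] [DecidableEq ι] (a : ι) (g f : ι → ℝ)
    {c : ℝ} (hf : ∀ i, i ≠ a → f i = c) :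
    ∑ i, g i * f i = g a * f a + (∑ i, g i - g a) * c := by
  rw [← add_sum_erase _ _ (mem_univ a), ← add_sum_erase _ g (mem_univ a), add_sub_cancel_left,
    sum_mul]
  congr 1
  exact sum_congr rfl fun i hi => by rw [hf i (ne_of_mem_erase hi)]

namespace GenPTT

variable {r1 r2 s1 s2 : ℕ} {W1 : Fin (r1 + 3) → Fin (r2 + 3) → Fin (s1 + 2) → ℝ}
  {W2 : Fin (r1 + 3) → Fin (r2 + 3) → Fin (s2 + 2) → ℝ}

lemma log_card_sub_sum_negMulLog_zero (hW : GenPTT W1 W2) (x2 : Fin (r2 + 3)) :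
    log (Fintype.card (Fin (s2 + 2))) - ∑ y, negMulLog (W2 0 x2 y) = 0 := by
  simp only [hW.2.2.2.2.1 x2, sum_const, card_univ, Fintype.card_fin, nsmul_eq_mul, negMulLog,
    one_div, log_inv]
  push_cast
  field_simp
  ring

lemma log_card_sub_sum_negMulLog_of_ne_zero (hW : GenPTT W1 W2) {x1 : Fin (r1 + 3)}
    (hx1 : x1 ≠ 0) (x2 : Fin (r2 + 3)) :
    log (Fintype.card (Fin (s2 + 2))) - ∑ y, negMulLog (W2 x1 x2 y) = C1 W2 x2 := by
  obtain ⟨σ, hσ⟩ := hW.2.2.2.2.2.1 x2 x1 hx1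
  simp only [C1, ent_eq_sum_negMulLog, hσ, Fintype.card_fin]
  rw [Equiv.sum_comp σ (fun y => negMulLog (W2 1 x2 y))]
  push_cast
  rfl

lemma scaledMutualInfo_le (hW : GenPTT W1 W2) {P : Fin (r1 + 3) → Fin (r2 + 3) → ℝ}
    (hP : ∀ x1 x2, 0 ≤ P x1 x2) (x2 : Fin (r2 + 3)) :
    scaledMutualInfo (fun x1 => P x1 x2) (fun x1 => W2 x1 x2) ≤
      (marg2 P x2 - P 0 x2) * C1 W2 x2 := by
  refine (_root_.scaledMutualInfo_le (hP · x2) (hW.2.1 · x2) (hW.2.2.2.1 · x2)).trans_eq ?_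
  rw [sum_mul_eq_of_forall_ne 0 _ _ fun x1 hx1 => hW.log_card_sub_sum_negMulLog_of_ne_zero hx1 x2,
    hW.log_card_sub_sum_negMulLog_zero, mul_zero, zero_add]
  rfl

end GenPTT

/-- Upper bound on `I_P(X₁;Y₂|X₂)` via the symmetry property. -/
theorem stmt9 (r1 r2 s1 s2 : ℕ)
    (W1 : Fin (r1 + 3) → Fin (r2 + 3) → Fin (s1 + 2) → ℝ)
    (W2 : Fin (r1 + 3) → Fin (r2 + 3) → Fin (s2 + 2) → ℝ)
    (hW : GenPTT W1 W2) (hSym : SymProp W1 W2)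
    (P : Fin (r1 + 3) → Fin (r2 + 3) → ℝ) (hP : IsJointProbDist P) :
    condMI1 P W2 ≤ (marg2 P 0 - P 0 0) * C1 W2 0 +
      (1 - marg1 P 0 - marg2 P 0 + P 0 0) * C1 W2 1 := by
  have hmarg2 : ∑ x2, marg2 P x2 = 1 := by
    rw [← hP.2]
    exact sum_comm
  calc condMI1 P W2 = ∑ x2, scaledMutualInfo (fun x1 => P x1 x2) (fun x1 => W2 x1 x2) := rfl
    _ ≤ ∑ x2, (marg2 P x2 - P 0 x2) * C1 W2 x2 :=
      sum_le_sum fun x2 _ => hW.scaledMutualInfo_le hP.1 x2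
    _ = _ := by
      rw [sum_mul_eq_of_forall_ne 0 _ _ hSym.1, sum_sub_distrib, hmarg2]
      simp only [marg1]
      ring
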